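/- arXiv:2106.15786 — 4 statements merged into one kernel-verified Lean document; each statement's English description precedes it below -/
import Mathlib

section
/- Let {V_t} be a nonnegative real sequence satisfying V_{t+1} ≤ (1 - α_t) V_t + α_t² C for all t ≥ 0, where C ≥ 0 and α_t = 1/(t+1) for all t ≥ 0. Then V_t ≤ C(1 + ln t)/t for all t ≥ 1. -/
/-!
The bound `u t = C (1 + log t) / t` is a supersolution of the recursion: since
`(1 - 1/(t+1)) · C (1 + log t) / t = C (1 + log t) / (t+1)`, it suffices that the noise term
`C / (t+1)²` is at most `C (log (t+1) - log t) / (t+1)`, which is the estimate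
`1/(t+1) ≤ log (t+1) - log t`. Induction from `V 1 ≤ C` then gives the claim.
-/

open Real

lemma inv_add_one_le_log_add_one_sub_log {x : ℝ} (hx : 0 < x) :
    (x + 1)⁻¹ ≤ log (x + 1) - log x := by
  have h := one_sub_inv_le_log_of_pos (div_pos (by linarith) hx : 0 < (x + 1) / x)
  rw [log_div (by linarith) hx.ne', inv_div] at h
  have : 1 - x / (x + 1) = (x + 1)⁻¹ := by field_simp; ring
  linarith

lemma step_le_log_bound {x C v : ℝ} (hx : 0 < x) (hC : 0 ≤ C) (hv : v ≤ C * (1 + log x) / x) :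
    (1 - 1 / (x + 1)) * v + (1 / (x + 1)) ^ 2 * C ≤ C * (1 + log (x + 1)) / (x + 1) := by
  have hx1 : 0 < x + 1 := by linarith
  have hcontract : (1 - 1 / (x + 1)) * v ≤ C * (1 + log x) / (x + 1) :=
    calc (1 - 1 / (x + 1)) * v ≤ (1 - 1 / (x + 1)) * (C * (1 + log x) / x) := by
          gcongr
          rw [sub_nonneg, div_le_one hx1]
          linarith
      _ = C * (1 + log x) / (x + 1) := by field_simp; ring
  have hnoise : (1 / (x + 1)) ^ 2 * C ≤ C * (log (x + 1) - log x) / (x + 1) :=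
    calc (1 / (x + 1)) ^ 2 * C = C * (x + 1)⁻¹ / (x + 1) := by field_simp
      _ ≤ C * (log (x + 1) - log x) / (x + 1) := by
          gcongr
          exact inv_add_one_le_log_add_one_sub_log hx
  calc (1 - 1 / (x + 1)) * v + (1 / (x + 1)) ^ 2 * C
      ≤ C * (1 + log x) / (x + 1) + C * (log (x + 1) - log x) / (x + 1) :=
        add_le_add hcontract hnoise
    _ = C * (1 + log (x + 1)) / (x + 1) := by ring

theorem stmt_0_general (V : ℕ → ℝ) (C : ℝ) (hC : 0 ≤ C)
    (hrec : ∀ t : ℕ, V (t + 1) ≤ (1 - 1 / (t + 1 : ℝ)) * V t + (1 / (t + 1 : ℝ))^2 * C) :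
    ∀ t : ℕ, 1 ≤ t → V t ≤ C * (1 + Real.log t) / t := by
  intro t ht
  induction t, ht using Nat.le_induction with
  | base => simpa using hrec 0
  | succ n hn ih =>
    push_cast
    exact (hrec n).trans (step_le_log_bound (by exact_mod_cast hn) hC ih)

theorem stmt_0 (V : ℕ → ℝ) (C : ℝ) (hC : 0 ≤ C) (hV : ∀ t, 0 ≤ V t)
    (hrec : ∀ t : ℕ, V (t + 1) ≤ (1 - 1 / (t + 1 : ℝ)) * V t + (1 / (t + 1 : ℝ))^2 * C) :
    ∀ t : ℕ, 1 ≤ t → V t ≤ C * (1 + Real.log t) / t :=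
  stmt_0_general V C hC hrec
end

section
/- Let {V_t} be a nonnegative sequence, C ≥ 0, and α_t ∈ [0,1] with α_0 = 1, satisfying V_{t+1} ≤ (1-α_t)V_t + α_t² C. Let {β_t} be a nonnegative sequence satisfying β_t ≥ β_{t+1}(1 - α_{t+1}) for all t ≥ 0. Then for all t ≥ 1 with β_t(1 - α_t) > 0, one has V_t ≤ C (∑_{i=0}^{t-1} β_i α_i²) / (β_t (1 - α_t)). -/
theorem stmt_7 (V β α : ℕ → ℝ) (C : ℝ) (hC : 0 ≤ C)
    (hV : ∀ t, 0 ≤ V t) (hβ : ∀ t, 0 ≤ β t)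
    (hα : ∀ t, α t ∈ Set.Icc (0 : ℝ) 1) (hα0 : α 0 = 1)
    (hrec : ∀ t : ℕ, V (t + 1) ≤ (1 - α t) * V t + (α t)^2 * C)
    (hβrec : ∀ t : ℕ, β (t + 1) * (1 - α (t + 1)) ≤ β t) :
    ∀ t : ℕ, 1 ≤ t → 0 < β t * (1 - α t) →
      V t ≤ C * (∑ i ∈ Finset.range t, β i * (α i)^2) / (β t * (1 - α t)) := by
  have key : ∀ t : ℕ, β t * (1 - α t) * V t ≤ C * ∑ i ∈ Finset.range t, β i * (α i)^2 := by
    intro t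
    induction t with
    | zero => simp [hα0]
    | succ t ih =>
      have h1 : β (t+1) * (1 - α (t+1)) * V (t+1) ≤ β t * V (t+1) := by
        apply mul_le_mul_of_nonneg_right (hβrec t) (hV _)
      have h2 : β t * V (t+1) ≤ β t * ((1 - α t) * V t + (α t)^2 * C) :=
        mul_le_mul_of_nonneg_left (hrec t) (hβ t)
      have h3 : β t * ((1 - α t) * V t + (α t)^2 * C)
          ≤ C * ∑ i ∈ Finset.range (t+1), β i * (α i)^2 := by
        rw [Finset.sum_range_succ, mul_add]
        have : β t * ((1 - α t) * V t) ≤ C * ∑ i ∈ Finset.range t, β i * (α i)^2 := by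
          calc β t * ((1 - α t) * V t) = β t * (1 - α t) * V t := by ring
            _ ≤ _ := ih
        nlinarith
      linarith
  intro t _ hpos
  rw [le_div_iff₀ hpos]
  calc V t * (β t * (1 - α t)) = β t * (1 - α t) * V t := by ring
    _ ≤ _ := key t
end

section
/- Let h(x) = ∑_{i=1}^n x_i ln(x_i) be the negative entropy on the probability simplex Δ_n = {x ∈ ℝ^n : x_i ≥ 0, ∑ x_i = 1}. Then h is 1-strongly convex with respect to the ℓ₁-norm on Δ_n: for all x in the relative interior of Δ_n and all x' ∈ Δ_n, h(x') ≥ h(x) + ⟨∇h(x), x' - x⟩ + (1/2)‖x' - x‖₁², where ∇h(x)_i = ln(x_i) + 1. -/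
/-!
Writing `t = x'ᵢ / xᵢ`, the Bregman gap of `h` is `∑ᵢ xᵢ klFun tᵢ` with `klFun t = t log t + 1 - t`,
because `∑ᵢ (x'ᵢ - xᵢ) = 0`. A second-derivative check gives the pointwise bound
`klFun t ≥ 3 (t - 1)² / (2 (t + 2))`, i.e. `xᵢ klFun tᵢ ≥ 3 (x'ᵢ - xᵢ)² / (2 (x'ᵢ + 2 xᵢ))`.
Summing and applying Cauchy–Schwarz in Sedrakyan's form with the weights `x'ᵢ + 2 xᵢ`,
which sum to `3`, yields `(3 / 2) ‖x' - x‖₁² / 3`.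
-/

/-- The probability simplex in `Fin n → ℝ`. -/
def simplex (n : ℕ) : Set (Fin n → ℝ) :=
  {x | (∀ i, 0 ≤ x i) ∧ ∑ i, x i = 1}

open Real Set InformationTheory

lemma hasDerivAt_klFun_sub {t : ℝ} (ht : 0 < t) :
    HasDerivAt (fun s ↦ klFun s - 3 / 2 * (s + 9 / (s + 2)))
      (log t - 3 / 2 * (1 - 9 / (t + 2) ^ 2)) t := by
  have h2 : t + 2 ≠ 0 := by positivity
  refine ((hasDerivAt_klFun ht.ne').sub (((hasDerivAt_id t).add
    ((hasDerivAt_const t 9).fun_div ((hasDerivAt_id t).add_const 2) h2)).const_mul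
      (3 / 2))).congr_deriv ?_
  simp only [id_eq]
  field_simp
  ring

lemma hasDerivAt_log_sub {t : ℝ} (ht : 0 < t) :
    HasDerivAt (fun s ↦ log s - 3 / 2 * (1 - 9 / (s + 2) ^ 2))
      (t⁻¹ - 27 / (t + 2) ^ 3) t := by
  have h2 : (t + 2) ^ 2 ≠ 0 := by positivity
  refine ((hasDerivAt_log ht.ne').sub (((hasDerivAt_const t 1).sub
    ((hasDerivAt_const t 9).fun_div (((hasDerivAt_id t).add_const 2).pow 2) h2)).const_mul
      (3 / 2))).congr_deriv ?_
  simp only [id_eq, Pi.pow_apply]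
  field_simp
  ring

theorem three_mul_sq_div_le_klFun {t : ℝ} (ht : 0 ≤ t) :
    3 * (t - 1) ^ 2 / (2 * (t + 2)) ≤ klFun t := by
  -- The bound is `3 / 2 * (t + 9 / (t + 2)) - 6`, and `klFun` minus it is convex with minimum at `1`.
  have hsplit : 3 * (t - 1) ^ 2 / (2 * (t + 2)) = 3 / 2 * (t + 9 / (t + 2)) - 6 := by
    field_simp
    ring
  set g : ℝ → ℝ := fun s ↦ klFun s - 3 / 2 * (s + 9 / (s + 2))
  have hconv : ConvexOn ℝ (Ici 0) g := by
    refine convexOn_of_hasDerivWithinAt2_nonneg (convex_Ici 0) ?_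
      (fun s hs ↦ (hasDerivAt_klFun_sub (interior_Ici.subset hs)).hasDerivWithinAt)
      (fun s hs ↦ (hasDerivAt_log_sub (interior_Ici.subset hs)).hasDerivWithinAt) ?_
    · refine continuous_klFun.continuousOn.sub (continuousOn_const.mul
        (continuousOn_id.add (continuousOn_const.div (by fun_prop) ?_)))
      intro s (hs : 0 ≤ s)
      positivity
    · rw [interior_Ici]
      intro s (hs : 0 < s)
      rw [sub_nonneg, div_le_iff₀ (by positivity), ← div_eq_inv_mul, le_div_iff₀ hs]
      -- `(s + 2) ^ 3 - 27 * s = (s - 1) ^ 2 * (s + 8)`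
      nlinarith [sq_nonneg (s - 1)]
  have hmin : IsMinOn g (Ici 0) 1 := by
    refine hconv.isMinOn_of_rightDeriv_eq_zero (by simp) ?_
    rw [(hasDerivAt_klFun_sub one_pos).hasDerivWithinAt.derivWithin (uniqueDiffWithinAt_Ioi 1)]
    norm_num
  have h := hmin (mem_Ici.2 ht)
  simp only [g, klFun_one, mem_ofPred_eq] at h
  linarith

lemma mul_klFun_div {p q : ℝ} (hq : q ≠ 0) :
    q * klFun (p / q) = p * log p - p * log q + q - p := by
  rcases eq_or_ne p 0 with rfl | hp
  · simp [klFun_zero]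
  · rw [klFun_apply, log_div hp hq]
    field_simp

theorem sub_add_three_mul_sq_div_le_mul_log_sub {p q : ℝ} (hp : 0 ≤ p) (hq : 0 < q) :
    p - q + 3 * (p - q) ^ 2 / (2 * (p + 2 * q)) ≤ p * log p - p * log q := by
  have h := mul_le_mul_of_nonneg_left (three_mul_sq_div_le_klFun (div_nonneg hp hq.le)) hq.le
  have hscale : q * (3 * (p / q - 1) ^ 2 / (2 * (p / q + 2))) =
      3 * (p - q) ^ 2 / (2 * (p + 2 * q)) := by
    field_simp
  rw [hscale, mul_klFun_div hq.ne'] at h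
  linarith

theorem half_sq_sum_abs_sub_le_sum_mul_log_sub {ι : Type*} [Fintype ι] {p q : ι → ℝ}
    (hp : ∀ i, 0 ≤ p i) (hq : ∀ i, 0 < q i) (hp_sum : ∑ i, p i = 1) (hq_sum : ∑ i, q i = 1) :
    1 / 2 * (∑ i, |p i - q i|) ^ 2 ≤ ∑ i, p i * log (p i) - ∑ i, p i * log (q i) := by
  have hweight_pos : ∀ i ∈ Finset.univ, 0 < p i + 2 * q i := fun i _ ↦ by
    linarith [hp i, hq i]
  have hweight_sum : ∑ i, (p i + 2 * q i) = 3 := by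
    rw [Finset.sum_add_distrib, ← Finset.mul_sum, hp_sum, hq_sum]
    norm_num
  have hsedrakyan := Finset.sq_sum_div_le_sum_sq_div Finset.univ (fun i ↦ |p i - q i|) hweight_pos
  simp only [sq_abs, hweight_sum] at hsedrakyan
  have hpointwise := Finset.sum_le_sum fun i (_ : i ∈ Finset.univ) ↦
    sub_add_three_mul_sq_div_le_mul_log_sub (hp i) (hq i)
  simp only [Finset.sum_add_distrib, Finset.sum_sub_distrib, hp_sum, hq_sum, sub_self, zero_add,
    mul_div_mul_comm, ← Finset.mul_sum] at hpointwise
  linarith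

theorem stmt_8 (n : ℕ) (x x' : Fin n → ℝ)
    (hx : x ∈ simplex n) (hxpos : ∀ i, 0 < x i) (hx' : x' ∈ simplex n) :
    ∑ i, x' i * Real.log (x' i) ≥
      (∑ i, x i * Real.log (x i)) +
      (∑ i, (Real.log (x i) + 1) * (x' i - x i)) +
      (1 / 2) * (∑ i, |x' i - x i|)^2 := by
  obtain ⟨-, hx_sum⟩ := hx
  obtain ⟨hx'_nonneg, hx'_sum⟩ := hx'
  have hgradient : ∑ i, x i * log (x i) + ∑ i, (log (x i) + 1) * (x' i - x i) =
      ∑ i, x' i * log (x i) + (∑ i, x' i - ∑ i, x i) := by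
    simp only [← Finset.sum_add_distrib, ← Finset.sum_sub_distrib]
    exact Finset.sum_congr rfl fun i _ ↦ by ring
  rw [ge_iff_le, hgradient, hx_sum, hx'_sum, sub_self, add_zero]
  linarith [half_sq_sum_abs_sub_le_sum_mul_log_sub hx'_nonneg hxpos hx'_sum hx_sum]
end

section
/- Let g(w) = η ln(∑_{i=1}^n exp(w_i/η)) for η > 0. Then ∇g is (1/η)-Lipschitz from (ℝ^n, ‖·‖_∞) to (ℝ^n, ‖·‖₁): ‖∇g(w) − ∇g(w')‖₁ ≤ (1/η)‖w − w'‖_∞ for all w, w' ∈ ℝ^n. -/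
/-!
For p = ∇g(w) and q = ∇g(w') we have log pᵢ - log qᵢ = (wᵢ - w'ᵢ)/η + const, so the symmetrised
relative entropy ∑ (pᵢ - qᵢ)(log pᵢ - log qᵢ) equals ∑ (pᵢ - qᵢ)(wᵢ - w'ᵢ)/η ≤ ‖p - q‖₁ ‖w - w'‖_∞ / η.
It also dominates ‖p - q‖₁²: termwise (x - y)(log x - log y) ≥ 2(x - y)²/(x + y), i.e. the
logarithmic mean is at most the arithmetic mean, and Cauchy–Schwarz with ∑ (pᵢ + qᵢ) = 2 sums this up.
-/

open Real Finset

-- Termwise: u (log (1 + u) - log (1 - u)) = ∑ₖ 2 u ^ (2k + 2) / (2k + 1).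
lemma two_mul_sq_le_mul_log_sub_log {u : ℝ} (hu : |u| < 1) :
    2 * u ^ 2 ≤ u * (log (1 + u) - log (1 - u)) := by
  have hsum := (hasSum_log_sub_log_of_abs_lt_one hu).mul_left u
  have hterm (k : ℕ) : u * (2 * (1 / (2 * k + 1)) * u ^ (2 * k + 1)) =
      2 / (2 * k + 1) * (u ^ (k + 1)) ^ 2 := by ring
  simp only [hterm] at hsum
  simpa using le_hasSum hsum 0 fun k _ => by positivity

lemma two_mul_sq_sub_div_add_le_sub_mul_log_sub {x y : ℝ} (hx : 0 < x) (hy : 0 < y) :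
    2 * (x - y) ^ 2 / (x + y) ≤ (x - y) * (log x - log y) := by
  have hxy : 0 < x + y := by positivity
  set u := (x - y) / (x + y) with hu_def
  have hu : |u| < 1 := by
    rw [abs_lt, lt_div_iff₀ hxy, div_lt_iff₀ hxy]
    constructor <;> linarith
  have hlog : log (1 + u) - log (1 - u) = log x - log y := by
    have hplus : 1 + u = 2 / (x + y) * x := by rw [hu_def]; field_simp; ring
    have hminus : 1 - u = 2 / (x + y) * y := by rw [hu_def]; field_simp; ring
    rw [hplus, hminus, log_mul (by positivity) hx.ne', log_mul (by positivity) hy.ne']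
    ring
  have key := two_mul_sq_le_mul_log_sub_log hu
  rw [hlog] at key
  calc 2 * (x - y) ^ 2 / (x + y) = (x + y) * (2 * u ^ 2) := by rw [hu_def]; field_simp
    _ ≤ (x + y) * (u * (log x - log y)) := by gcongr
    _ = (x - y) * (log x - log y) := by rw [hu_def]; field_simp

lemma sq_sum_abs_sub_le_mul_sum_sub_mul_log_sub {ι : Type*} [Fintype ι] {p q : ι → ℝ}
    (hp : ∀ i, 0 < p i) (hq : ∀ i, 0 < q i) :
    (∑ i, |p i - q i|) ^ 2 ≤
      (∑ i, (p i + q i)) / 2 * ∑ i, (p i - q i) * (log (p i) - log (q i)) := by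
  have hpq i : 0 < p i + q i := add_pos (hp i) (hq i)
  have hlog : ∑ i, (p i - q i) ^ 2 / (p i + q i) ≤
      (∑ i, (p i - q i) * (log (p i) - log (q i))) / 2 := by
    rw [le_div_iff₀ two_pos, sum_mul]
    refine sum_le_sum fun i _ => ?_
    have := two_mul_sq_sub_div_add_le_sub_mul_log_sub (hp i) (hq i)
    rw [mul_div_assoc] at this
    linarith
  calc (∑ i, |p i - q i|) ^ 2 ≤ (∑ i, (p i + q i)) * ∑ i, (p i - q i) ^ 2 / (p i + q i) := by
        refine sum_sq_le_sum_mul_sum_of_sq_le_mul _ (fun i _ => (hpq i).le)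
          (fun i _ => div_nonneg (sq_nonneg _) (hpq i).le) fun i _ => ?_
        rw [sq_abs, mul_div_cancel₀ _ (hpq i).ne']
    _ ≤ (∑ i, (p i + q i)) * ((∑ i, (p i - q i) * (log (p i) - log (q i))) / 2) := by
        gcongr
        exact sum_nonneg fun i _ => (hpq i).le
    _ = _ := by ring

noncomputable def softmax {ι : Type*} [Fintype ι] (x : ι → ℝ) (i : ι) : ℝ :=
  exp (x i) / ∑ j, exp (x j)

section softmax

variable {ι : Type*} [Fintype ι] (x y : ι → ℝ)

lemma sum_exp_pos [Nonempty ι] : 0 < ∑ j, exp (x j) :=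
  sum_pos (fun _ _ => exp_pos _) univ_nonempty

lemma softmax_pos [Nonempty ι] (i : ι) : 0 < softmax x i := div_pos (exp_pos _) (sum_exp_pos x)

lemma sum_softmax [Nonempty ι] : ∑ i, softmax x i = 1 := by
  simp_rw [softmax, ← sum_div, div_self (sum_exp_pos x).ne']

lemma log_softmax [Nonempty ι] (i : ι) : log (softmax x i) = x i - log (∑ j, exp (x j)) := by
  rw [softmax, log_div (exp_pos _).ne' (sum_exp_pos x).ne', log_exp]

lemma sum_sub_softmax_mul_log_sub [Nonempty ι] :
    ∑ i, (softmax x i - softmax y i) * (log (softmax x i) - log (softmax y i)) =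
      ∑ i, (softmax x i - softmax y i) * (x i - y i) := by
  have hsplit i : (softmax x i - softmax y i) * (log (softmax x i) - log (softmax y i)) =
      (softmax x i - softmax y i) * (x i - y i) - (softmax x i - softmax y i) *
        (log (∑ j, exp (x j)) - log (∑ j, exp (y j))) := by
    rw [log_softmax, log_softmax]; ring
  rw [sum_congr rfl fun i _ => hsplit i, sum_sub_distrib, ← sum_mul, sum_sub_distrib,
    sum_softmax, sum_softmax, sub_self, zero_mul, sub_zero]

lemma sum_abs_sub_softmax_le : ∑ i, |softmax x i - softmax y i| ≤ ‖x - y‖ := by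
  rcases isEmpty_or_nonempty ι with hι | hι
  · simp
  set D := ∑ i, |softmax x i - softmax y i|
  have hD : D ^ 2 ≤ D * ‖x - y‖ := calc
    D ^ 2 ≤ (∑ i, (softmax x i + softmax y i)) / 2 *
        ∑ i, (softmax x i - softmax y i) * (log (softmax x i) - log (softmax y i)) :=
      sq_sum_abs_sub_le_mul_sum_sub_mul_log_sub (softmax_pos x) (softmax_pos y)
    _ = ∑ i, (softmax x i - softmax y i) * (x i - y i) := by
      rw [sum_add_distrib, sum_softmax, sum_softmax, sum_sub_softmax_mul_log_sub]
      norm_num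
    _ ≤ ∑ i, |softmax x i - softmax y i| * ‖x - y‖ := by
      refine sum_le_sum fun i _ => (le_abs_self _).trans ?_
      rw [abs_mul]
      gcongr
      exact norm_le_pi_norm (x - y) i
    _ = D * ‖x - y‖ := (sum_mul ..).symm
  have hD₀ : 0 ≤ D := sum_nonneg fun i _ => abs_nonneg _
  nlinarith [norm_nonneg (x - y)]

end softmax

theorem stmt_19 (n : ℕ) (η : ℝ) (hη : 0 < η) (w w' : Fin n → ℝ) :
    ∑ i, |Real.exp (w i / η) / (∑ j, Real.exp (w j / η)) -
          Real.exp (w' i / η) / (∑ j, Real.exp (w' j / η))|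
      ≤ (1 / η) * ‖w - w'‖ := by
  have hscale : (fun i => w i / η) - (fun i => w' i / η) = η⁻¹ • (w - w') := by
    ext i
    simp only [Pi.sub_apply, Pi.smul_apply, smul_eq_mul]
    ring
  calc _ ≤ ‖(fun i => w i / η) - (fun i => w' i / η)‖ := sum_abs_sub_softmax_le _ _
    _ = (1 / η) * ‖w - w'‖ := by
      rw [hscale, norm_smul, Real.norm_eq_abs, abs_inv, abs_of_pos hη, one_div]
end
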